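/- Let $E=\wedge V$, $v=\dim V$, and let ${\bf T}$ be a doubly infinite minimal exact complex (Tate resolution) of finitely generated graded free $E$-modules. If $(K \otimes_E T^0)_j = 0$ for all $j < 0$, then $(K \otimes_E T^l)_m = 0$ whenever $l > 0$ and $m < l$, and also whenever $l < 0$ and $m < l - v + 1$. -/

import Mathlib

noncomputable section

variable (K : Type) [Field K] (V : Type) [AddCommGroup V] [Module K V]
  [FiniteDimensional K V]

/-- The `K`-subspace `𝔪 · N = V · N` of an `E = ⋀V`-module `N`; a graded piece of `N` is
contained in it exactly when the corresponding piece of `K ⊗_E N` vanishes. -/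
def mT (N : Type) [AddCommGroup N] [Module K N] [Module (ExteriorAlgebra K V) N] :
    Submodule K N :=
  Submodule.span K {z : N | ∃ (w : V) (y : N), z = (ExteriorAlgebra.ι K w) • y}

set_option linter.unusedSectionVars false
set_option maxHeartbeats 1000000


noncomputable section

open ExteriorAlgebra

variable (K : Type) [Field K] (V : Type) [AddCommGroup V] [Module K V]
  [FiniteDimensional K V]

local notation "E" => ExteriorAlgebra K V

/-- Product of a list of `ι`'s in the exterior algebra. -/
def ιProd (L : List V) : E := (L.map (ExteriorAlgebra.ι K)).prod

variable {K V}

@[simp] lemma ιProd_nil : ιProd K V ([] : List V) = 1 := rfl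

@[simp] lemma ιProd_cons (a : V) (L : List V) :
    ιProd K V (a :: L) = ExteriorAlgebra.ι K a * ιProd K V L := by
  simp [ιProd]

lemma ιProd_append (L M : List V) :
    ιProd K V (L ++ M) = ιProd K V L * ιProd K V M := by
  simp [ιProd]

lemma ι_anticomm (a c : V) :
    ExteriorAlgebra.ι K a * ExteriorAlgebra.ι K c
      = -(ExteriorAlgebra.ι K c * ExteriorAlgebra.ι K a) := by
  have h := ExteriorAlgebra.ι_sq_zero (R := K) (a + c)
  have ha := ExteriorAlgebra.ι_sq_zero (R := K) a
  have hc := ExteriorAlgebra.ι_sq_zero (R := K) c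
  rw [map_add, add_mul, mul_add, mul_add, ha, hc, zero_add, add_zero] at h
  rw [eq_neg_iff_add_eq_zero, h]

lemma ι_mul_ιProd (a : V) (L : List V) :
    ExteriorAlgebra.ι K a * ιProd K V L
      = ((-1 : ℤ) ^ L.length) • (ιProd K V L * ExteriorAlgebra.ι K a) := by
  induction L with
  | nil => simp
  | cons c L ih =>
    rw [ιProd_cons, List.length_cons, ← mul_assoc, ι_anticomm a c, neg_mul, mul_assoc, ih,
      pow_succ]
    rw [mul_smul_comm, mul_assoc, ← neg_smul, mul_neg_one]

lemma ιProd_dup (L₁ L₂ L₃ : List V) (a : V) :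
    ιProd K V (L₁ ++ a :: (L₂ ++ a :: L₃)) = 0 := by
  have key : ExteriorAlgebra.ι K a * (ιProd K V L₂ * (ExteriorAlgebra.ι K a * ιProd K V L₃))
      = 0 := by
    rw [← mul_assoc, ι_mul_ιProd a L₂, smul_mul_assoc, mul_assoc,
      ← mul_assoc (ExteriorAlgebra.ι K a), ExteriorAlgebra.ι_sq_zero, zero_mul, mul_zero,
      smul_zero]
  rw [ιProd_append, ιProd_cons, ιProd_append, ιProd_cons, key, mul_zero]

lemma ιProd_dup_left {L₁ : List V} (a : V) (ha : a ∈ L₁) (L₂ : List V) :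
    ιProd K V (L₁ ++ a :: L₂) = 0 := by
  obtain ⟨s, t, rfl⟩ := List.append_of_mem ha
  have : s ++ a :: t ++ a :: L₂ = s ++ a :: (t ++ a :: L₂) := by simp
  rw [this, ιProd_dup]

lemma ιProd_dup_right (L₁ : List V) (a : V) {L₂ : List V} (ha : a ∈ L₂) :
    ιProd K V (L₁ ++ a :: L₂) = 0 := by
  obtain ⟨s, t, rfl⟩ := List.append_of_mem ha
  exact ιProd_dup L₁ s t a

end

noncomputable section
variable {K : Type} [Field K] {V : Type} [AddCommGroup V] [Module K V]
  [FiniteDimensional K V]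

local notation "E" => ExteriorAlgebra K V
local notation "vdim" => Module.finrank K V

/-- Any product of more than `dim V` many `ι`'s vanishes. -/
lemma ιProd_eq_zero_of_long (L : List V) (hL : vdim < L.length) : ιProd K V L = 0 := by
  -- first reduce to the case of length exactly `vdim + 1`
  obtain ⟨L, M, rfl, hlen⟩ : ∃ L' M', L = L' ++ M' ∧ L'.length = vdim + 1 :=
    ⟨L.take (vdim + 1), L.drop (vdim + 1), (List.take_append_drop _ L).symm,
      List.length_take_of_le (by omega)⟩
  rw [ιProd_append]
  suffices h : ιProd K V L = 0 by rw [h, zero_mul]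
  -- the family `L.get` is linearly dependent
  have hdep : ¬ LinearIndependent K (fun i : Fin L.length => L.get i) := by
    intro h
    have := h.fintype_card_le_finrank
    simp [hlen] at this
  rw [Fintype.not_linearIndependent_iff] at hdep
  obtain ⟨g, hsum, t, hgt⟩ := hdep
  -- express ι (L.get t) in terms of the other ι's
  have hexp : ExteriorAlgebra.ι K (L.get t)
      = ∑ i ∈ Finset.univ.erase t, (-(g t)⁻¹ * g i) • ExteriorAlgebra.ι K (L.get i) := by
    have h1 : g t • (L.get t) = - ∑ i ∈ Finset.univ.erase t, g i • L.get i := by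
      rw [eq_neg_iff_add_eq_zero, ← Finset.sum_erase_add _ _ (Finset.mem_univ t)] at *
      rw [add_comm] at hsum
      exact hsum
    have h2 : L.get t = ∑ i ∈ Finset.univ.erase t, (-(g t)⁻¹ * g i) • L.get i := by
      have := congrArg (fun z => (g t)⁻¹ • z) h1
      simp only [smul_smul, inv_mul_cancel₀ hgt, one_smul, smul_neg, Finset.smul_sum] at this
      rw [this, ← Finset.sum_neg_distrib]
      exact Finset.sum_congr rfl fun i _ => by rw [← neg_smul, neg_mul]
    calc ExteriorAlgebra.ι K (L.get t)
        = ExteriorAlgebra.ι K (∑ i ∈ Finset.univ.erase t, (-(g t)⁻¹ * g i) • L.get i) := by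
          rw [← h2]
      _ = _ := by rw [map_sum]; exact Finset.sum_congr rfl fun i _ => by rw [map_smul]
  -- split the list at position t
  have hsplit : L = L.take t ++ L.get t :: L.drop (t + 1) := by
    conv_lhs => rw [← List.take_append_drop t L]
    congr 1
    rw [List.drop_eq_getElem_cons t.isLt]
    rfl
  rw [hsplit, ιProd_append, ιProd_cons, hexp, Finset.sum_mul, Finset.mul_sum]
  apply Finset.sum_eq_zero
  intro i hi
  rw [smul_mul_assoc, mul_smul_comm]
  have hi' : i ≠ t := Finset.ne_of_mem_erase hi
  -- the vector L.get i occurs in the remaining list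
  rcases lt_or_gt_of_ne hi' with hlt | hgt2
  · -- L.get i is in the `take t` part
    have hmem : L.get i ∈ L.take t := by
      rw [List.mem_take_iff_getElem]
      exact ⟨i, by omega, rfl⟩
    rw [← ιProd_cons, ← ιProd_append, ιProd_dup_left _ hmem, smul_zero]
  · -- L.get i is in the `drop (t+1)` part
    have hmem : L.get i ∈ L.drop (t + 1) := by
      rw [List.mem_iff_getElem]
      refine ⟨i - (t+1), by rw [List.length_drop]; omega, ?_⟩
      rw [List.getElem_drop]
      congr 1
      omega
    rw [← ιProd_cons, ← ιProd_append, ιProd_dup_right _ _ hmem, smul_zero]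

end

noncomputable section
variable {K : Type} [Field K] {V : Type} [AddCommGroup V] [Module K V]
  [FiniteDimensional K V]

local notation "E" => ExteriorAlgebra K V
local notation "vdim" => Module.finrank K V

lemma contractLeft_ιProd_zero (f : Module.Dual K V) (L : List V) (h : ∀ a ∈ L, f a = 0) :
    CliffordAlgebra.contractLeft (Q := (0 : QuadraticForm K V)) f (ιProd K V L) = 0 := by
  induction L with
  | nil => simpa using CliffordAlgebra.contractLeft_one (Q := (0 : QuadraticForm K V)) (d := f)
  | cons a L ih =>
    rw [ιProd_cons, CliffordAlgebra.contractLeft_ι_mul, h a (by simp),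
      ih (fun x hx => h x (by simp [hx])), zero_smul, mul_zero, sub_zero]

lemma ιProd_basis_map_ne_zero (bV : Module.Basis (Fin vdim) K V) (I : List (Fin vdim)) (hI : I.Nodup) :
    ιProd K V (I.map bV) ≠ 0 := by
  induction I with
  | nil =>
    simp only [List.map_nil, ιProd_nil]
    exact one_ne_zero
  | cons k I ih =>
    rcases List.nodup_cons.mp hI with ⟨hk, hI'⟩
    intro hzero
    apply ih hI'
    have hc : ∀ a ∈ I.map bV, bV.coord k a = 0 := by
      intro a ha
      obtain ⟨i, hi, rfl⟩ := List.mem_map.mp ha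
      have : i ≠ k := fun h => hk (h ▸ hi)
      rw [Module.Basis.coord_apply, Module.Basis.repr_self, Finsupp.single_apply, if_neg this]
    have := congrArg
      (fun z => CliffordAlgebra.contractLeft (Q := (0 : QuadraticForm K V)) (bV.coord k) z) hzero
    simp only [List.map_cons, ιProd_cons, map_zero] at this
    rw [CliffordAlgebra.contractLeft_ι_mul, contractLeft_ιProd_zero _ _ hc, mul_zero, sub_zero,
      Module.Basis.coord_apply, Module.Basis.repr_self, Finsupp.single_apply, if_pos rfl, one_smul] at this
    exact this

end

noncomputable section
variable (K : Type) [Field K] (V : Type) [AddCommGroup V] [Module K V]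
  [FiniteDimensional K V]

local notation "E" => ExteriorAlgebra K V
local notation "vdim" => Module.finrank K V

/-- The augmentation ideal of `⋀ V`, as the `K`-span of left `ι`-multiples. -/
def Jspan : Submodule K E :=
  Submodule.span K {z : E | ∃ (w : V) (y : E), z = ExteriorAlgebra.ι K w * y}

/-- A fixed basis of `V`. -/
def bV : Module.Basis (Fin vdim) K V := Module.finBasis K V

/-- The top exterior form: product of all basis vectors. -/
def ωe : E := ιProd K V (List.ofFn (bV K V))

variable {K V}

lemma ωe_mul_ι (w : V) : ωe K V * ExteriorAlgebra.ι K w = 0 := by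
  have h : ωe K V * ExteriorAlgebra.ι K w = ιProd K V (List.ofFn (bV K V) ++ [w]) := by
    rw [ιProd_append]; simp [ωe]
  rw [h]
  apply ιProd_eq_zero_of_long
  simp

lemma ωe_ne_zero : ωe K V ≠ 0 := by
  have h : List.ofFn (bV K V) = (List.finRange vdim).map (bV K V) := List.ofFn_eq_map
  rw [ωe, h]
  exact ιProd_basis_map_ne_zero (bV K V) _ (List.nodup_finRange _)

lemma Jspan_mul_right {z : E} (hz : z ∈ Jspan K V) (y : E) : z * y ∈ Jspan K V := by
  induction hz using Submodule.span_induction with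
  | mem x hx =>
    obtain ⟨w, r, rfl⟩ := hx
    exact Submodule.subset_span ⟨w, r * y, by rw [mul_assoc]⟩
  | zero => rw [zero_mul]; exact zero_mem _
  | add a b _ _ ha hb => rw [add_mul]; exact add_mem ha hb
  | smul k a _ ha => rw [smul_mul_assoc]; exact Submodule.smul_mem _ k ha

lemma sub_algebraMapInv_mem_Jspan (a : E) :
    a - algebraMap K E (ExteriorAlgebra.algebraMapInv a) ∈ Jspan K V := by
  induction a using ExteriorAlgebra.induction with
  | algebraMap r =>
    rw [ExteriorAlgebra.algebraMap_leftInverse _ r, sub_self]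
    exact zero_mem _
  | ι x =>
    have h : ExteriorAlgebra.algebraMapInv (R := K) (M := V) (ExteriorAlgebra.ι K x) = 0 := by
      simp [ExteriorAlgebra.algebraMapInv]
    rw [h, map_zero, sub_zero]
    exact Submodule.subset_span ⟨x, 1, by rw [mul_one]⟩
  | mul a b ha hb =>
    have key : a * b - algebraMap K E (ExteriorAlgebra.algebraMapInv (a * b))
        = (a - algebraMap K E (ExteriorAlgebra.algebraMapInv a)) * b
          + ExteriorAlgebra.algebraMapInv a •
            (b - algebraMap K E (ExteriorAlgebra.algebraMapInv b)) := by
      rw [map_mul, map_mul, Algebra.smul_def, sub_mul, mul_sub, ← Algebra.smul_def]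
      abel
    rw [key]
    exact add_mem (Jspan_mul_right ha b) (Submodule.smul_mem _ _ hb)
  | add a b ha hb =>
    have key : a + b - algebraMap K E (ExteriorAlgebra.algebraMapInv (a + b))
        = (a - algebraMap K E (ExteriorAlgebra.algebraMapInv a))
          + (b - algebraMap K E (ExteriorAlgebra.algebraMapInv b)) := by
      rw [map_add, map_add]; abel
    rw [key]
    exact add_mem ha hb

lemma ωe_mul_Jspan {z : E} (hz : z ∈ Jspan K V) : ωe K V * z = 0 := by
  induction hz using Submodule.span_induction with
  | mem x hx =>
    obtain ⟨w, r, rfl⟩ := hx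
    rw [← mul_assoc, ωe_mul_ι, zero_mul]
  | zero => rw [mul_zero]
  | add a b _ _ ha hb => rw [mul_add, ha, hb, add_zero]
  | smul k a _ ha => rw [mul_smul_comm, ha, smul_zero]

lemma algebraMapInv_eq_zero_of_ωe_mul {a : E} (h : ωe K V * a = 0) :
    ExteriorAlgebra.algebraMapInv (R := K) (M := V) a = 0 := by
  have h1 : ωe K V * (a - algebraMap K E (ExteriorAlgebra.algebraMapInv a)) = 0 :=
    ωe_mul_Jspan (sub_algebraMapInv_mem_Jspan a)
  rw [mul_sub, h, zero_sub, neg_eq_zero, ← Algebra.commutes, ← Algebra.smul_def] at h1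
  rcases smul_eq_zero.mp h1 with h2 | h2
  · exact h2
  · exact absurd h2 ωe_ne_zero

lemma mem_Jspan_of_ωe_mul {a : E} (h : ωe K V * a = 0) : a ∈ Jspan K V := by
  have := sub_algebraMapInv_mem_Jspan (K := K) (V := V) a
  rwa [algebraMapInv_eq_zero_of_ωe_mul h, map_zero, sub_zero] at this

end

noncomputable section
variable (K : Type) [Field K] (V : Type) [AddCommGroup V] [Module K V]
  [FiniteDimensional K V]

local notation "E" => ExteriorAlgebra K V
local notation "vdim" => Module.finrank K V

/-- The `K`-span of left multiples of the basis vectors indexed by `S`. -/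
def JS (S : Finset (Fin vdim)) : Submodule K E :=
  Submodule.span K {z : E | ∃ k ∈ S, ∃ r : E, z = ExteriorAlgebra.ι K (bV K V k) * r}

variable {K V}

lemma JS_contract {S : Finset (Fin vdim)} {k : Fin vdim} (hk : k ∉ S) {z : E}
    (hz : z ∈ JS K V S) :
    CliffordAlgebra.contractLeft (Q := (0 : QuadraticForm K V)) ((bV K V).coord k) z
      ∈ JS K V S := by
  induction hz using Submodule.span_induction with
  | mem x hx =>
    obtain ⟨i, hi, r, rfl⟩ := hx
    rw [CliffordAlgebra.contractLeft_ι_mul]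
    have hik : i ≠ k := fun h => hk (h ▸ hi)
    have : (bV K V).coord k ((bV K V) i) = 0 := by
      rw [Module.Basis.coord_apply, Module.Basis.repr_self, Finsupp.single_apply, if_neg hik]
    rw [this, zero_smul, zero_sub]
    exact neg_mem (Submodule.subset_span ⟨i, hi, _, rfl⟩)
  | zero => rw [map_zero]; exact zero_mem _
  | add a b _ _ ha hb => rw [map_add]; exact add_mem ha hb
  | smul c a _ ha => rw [map_smul]; exact Submodule.smul_mem _ c ha

lemma JS_split {S : Finset (Fin vdim)} {k : Fin vdim} (hk : k ∉ S) {a : E}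
    (h : ExteriorAlgebra.ι K (bV K V k) * a ∈ JS K V S) :
    a - ExteriorAlgebra.ι K (bV K V k)
        * CliffordAlgebra.contractLeft (Q := (0 : QuadraticForm K V)) ((bV K V).coord k) a
      ∈ JS K V S := by
  have hid : CliffordAlgebra.contractLeft (Q := (0 : QuadraticForm K V)) ((bV K V).coord k)
      (ExteriorAlgebra.ι K (bV K V k) * a)
      = a - ExteriorAlgebra.ι K (bV K V k)
          * CliffordAlgebra.contractLeft (Q := (0 : QuadraticForm K V)) ((bV K V).coord k) a := by
    rw [CliffordAlgebra.contractLeft_ι_mul]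
    have : (bV K V).coord k ((bV K V) k) = 1 := by
      rw [Module.Basis.coord_apply, Module.Basis.repr_self, Finsupp.single_apply, if_pos rfl]
    rw [this, one_smul]
  rw [← hid]
  exact JS_contract hk h

end

noncomputable section
variable (K : Type) [Field K] (V : Type) [AddCommGroup V] [Module K V]
  [FiniteDimensional K V]

local notation "E" => ExteriorAlgebra K V
local notation "vdim" => Module.finrank K V

/-- The `K`-subspace `∑_{k ∈ S} (b k) · N` of an `E`-module `N`. -/
def MS (S : Finset (Fin vdim)) (N : Type) [AddCommGroup N] [Module K N]
    [Module (ExteriorAlgebra K V) N] : Submodule K N :=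
  Submodule.span K
    {z : N | ∃ k ∈ S, ∃ y : N, z = (ExteriorAlgebra.ι K (bV K V k)) • y}

variable {K V}
variable {N : Type} [AddCommGroup N] [Module K N] [Module (ExteriorAlgebra K V) N]
  [IsScalarTower K (ExteriorAlgebra K V) N]

lemma smul_mem_mT {a : E} (ha : a ∈ Jspan K V) (y : N) : a • y ∈ mT K V N := by
  induction ha using Submodule.span_induction with
  | mem x hx =>
    obtain ⟨w, r, rfl⟩ := hx
    rw [mul_smul]
    exact Submodule.subset_span ⟨w, r • y, rfl⟩
  | zero => rw [zero_smul]; exact zero_mem _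
  | add a b _ _ ha hb => rw [add_smul]; exact add_mem ha hb
  | smul c a _ ha => rw [smul_assoc]; exact Submodule.smul_mem _ c ha

lemma smul_mem_MS {S : Finset (Fin vdim)} {a : E} (ha : a ∈ JS K V S) (y : N) :
    a • y ∈ MS K V S N := by
  induction ha using Submodule.span_induction with
  | mem x hx =>
    obtain ⟨k, hk, r, rfl⟩ := hx
    rw [mul_smul]
    exact Submodule.subset_span ⟨k, hk, r • y, rfl⟩
  | zero => rw [zero_smul]; exact zero_mem _
  | add a b _ _ ha hb => rw [add_smul]; exact add_mem ha hb
  | smul c a _ ha => rw [smul_assoc]; exact Submodule.smul_mem _ c ha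

lemma MS_empty : MS K V (∅ : Finset (Fin vdim)) N = ⊥ := by
  rw [MS, Submodule.span_eq_bot]
  rintro z ⟨k, hk, -⟩
  exact absurd hk (Finset.notMem_empty k)

lemma MS_mono {S S' : Finset (Fin vdim)} (h : S ⊆ S') : MS K V S N ≤ MS K V S' N :=
  Submodule.span_mono (by rintro z ⟨k, hk, y, rfl⟩; exact ⟨k, h hk, y, rfl⟩)

lemma ι_smul_mem_MS {S : Finset (Fin vdim)} (w : V) {z : N} (hz : z ∈ MS K V S N) :
    (ExteriorAlgebra.ι K w) • z ∈ MS K V S N := by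
  induction hz using Submodule.span_induction with
  | mem x hx =>
    obtain ⟨k, hk, y, rfl⟩ := hx
    rw [← mul_smul, ι_anticomm, neg_smul, mul_smul]
    exact neg_mem (Submodule.subset_span ⟨k, hk, _, rfl⟩)
  | zero => rw [smul_zero]; exact zero_mem _
  | add a b _ _ ha hb => rw [smul_add]; exact add_mem ha hb
  | smul c a _ ha => rw [smul_comm]; exact Submodule.smul_mem _ c ha

lemma ι_smul_mem_mT (w : V) (z : N) : (ExteriorAlgebra.ι K w) • z ∈ mT K V N :=
  Submodule.subset_span ⟨w, z, rfl⟩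

lemma MS_univ_eq_mT : MS K V (Finset.univ : Finset (Fin vdim)) N = mT K V N := by
  apply le_antisymm
  · exact Submodule.span_mono (by rintro z ⟨k, _, y, rfl⟩; exact ⟨bV K V k, y, rfl⟩)
  · rw [mT, Submodule.span_le]
    rintro z ⟨w, y, rfl⟩
    have hw : ExteriorAlgebra.ι K w
        = ∑ k, ((bV K V).repr w k) • ExteriorAlgebra.ι K (bV K V k) := by
      conv_lhs => rw [← Module.Basis.sum_repr (bV K V) w]
      rw [map_sum]
      exact Finset.sum_congr rfl fun k _ => by rw [map_smul]
    rw [hw, Finset.sum_smul]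
    refine Submodule.sum_mem _ fun k _ => ?_
    rw [smul_assoc]
    exact Submodule.smul_mem _ _ (Submodule.subset_span ⟨k, Finset.mem_univ k, y, rfl⟩)

lemma ωe_smul_mT {z : N} (hz : z ∈ mT K V N) : ωe K V • z = 0 := by
  induction hz using Submodule.span_induction with
  | mem x hx =>
    obtain ⟨w, y, rfl⟩ := hx
    rw [← mul_smul, ωe_mul_ι, zero_smul]
  | zero => rw [smul_zero]
  | add a b _ _ ha hb => rw [smul_add, ha, hb, add_zero]
  | smul c a _ ha => rw [smul_comm, ha, smul_zero]

lemma mem_MS_insert {S : Finset (Fin vdim)} {k : Fin vdim} {z : N}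
    (hz : z ∈ MS K V (insert k S) N) :
    ∃ h ρ, ρ ∈ MS K V S N ∧ z = (ExteriorAlgebra.ι K (bV K V k)) • h + ρ := by
  induction hz using Submodule.span_induction with
  | mem x hx =>
    obtain ⟨i, hi, y, rfl⟩ := hx
    rcases Finset.mem_insert.mp hi with rfl | hi'
    · exact ⟨y, 0, zero_mem _, by rw [add_zero]⟩
    · exact ⟨0, _, Submodule.subset_span ⟨i, hi', y, rfl⟩, by rw [smul_zero, zero_add]⟩
  | zero => exact ⟨0, 0, zero_mem _, by rw [smul_zero, zero_add]⟩
  | add a b _ _ ha hb =>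
    obtain ⟨h₁, ρ₁, hρ₁, rfl⟩ := ha
    obtain ⟨h₂, ρ₂, hρ₂, rfl⟩ := hb
    exact ⟨h₁ + h₂, ρ₁ + ρ₂, add_mem hρ₁ hρ₂, by rw [smul_add]; abel⟩
  | smul c a _ ha =>
    obtain ⟨h, ρ, hρ, rfl⟩ := ha
    exact ⟨c • h, c • ρ, Submodule.smul_mem _ c hρ, by rw [smul_add, smul_comm]⟩

lemma ιk_smul_MS_insert {S : Finset (Fin vdim)} {k : Fin vdim} {z : N}
    (hz : z ∈ MS K V (insert k S) N) :
    (ExteriorAlgebra.ι K (bV K V k)) • z ∈ MS K V S N := by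
  induction hz using Submodule.span_induction with
  | mem x hx =>
    obtain ⟨i, hi, y, rfl⟩ := hx
    rcases Finset.mem_insert.mp hi with rfl | hi'
    · rw [← mul_smul, ExteriorAlgebra.ι_sq_zero, zero_smul]; exact zero_mem _
    · rw [← mul_smul, ι_anticomm, neg_smul, mul_smul]
      exact neg_mem (Submodule.subset_span ⟨i, hi', _, rfl⟩)
  | zero => rw [smul_zero]; exact zero_mem _
  | add a b _ _ ha hb => rw [smul_add]; exact add_mem ha hb
  | smul c a _ ha => rw [smul_comm]; exact Submodule.smul_mem _ c ha

end

noncomputable section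
variable {K : Type} [Field K] {V : Type} [AddCommGroup V] [Module K V]
  [FiniteDimensional K V]

local notation "E" => ExteriorAlgebra K V
local notation "vdim" => Module.finrank K V

variable {N : Type} [AddCommGroup N] [Module K N] [Module (ExteriorAlgebra K V) N]
  [IsScalarTower K (ExteriorAlgebra K V) N] [Module.Free (ExteriorAlgebra K V) N]

open Module.Free

lemma sum_repr_smul_mem (q : N) {P : Submodule K N}
    (h : ∀ i, ((chooseBasis E N).repr q i) • ((chooseBasis E N) i) ∈ P) : q ∈ P := by
  have hq : q = ∑ i ∈ ((chooseBasis E N).repr q).support,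
      ((chooseBasis E N).repr q i) • ((chooseBasis E N) i) := by
    conv_lhs => rw [← Module.Basis.linearCombination_repr (chooseBasis E N) q]
    rw [Finsupp.linearCombination_apply, Finsupp.sum]
  rw [hq]
  exact Submodule.sum_mem _ fun i _ => h i

/-- If the top form kills `x`, then `x ∈ 𝔪N` (for `N` free). -/
lemma mem_mT_of_ωe_smul {x : N} (h : ωe K V • x = 0) : x ∈ mT K V N := by
  set B := chooseBasis E N
  have hco : ∀ i, ωe K V * (B.repr x i) = 0 := by
    intro i
    have : B.repr (ωe K V • x) = ωe K V • B.repr x := map_smul _ _ _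
    rw [h, map_zero] at this
    have := congrArg (fun F => F i) this
    simpa using this.symm
  apply sum_repr_smul_mem (V := V)
  intro i
  exact smul_mem_mT (mem_Jspan_of_ωe_mul (hco i)) _

lemma repr_mem_JS_of_mem_MS {S : Finset (Fin vdim)} {q : N} (hq : q ∈ MS K V S N) (i) :
    (chooseBasis E N).repr q i ∈ JS K V S := by
  induction hq using Submodule.span_induction with
  | mem x hx =>
    obtain ⟨k, hk, y, rfl⟩ := hx
    have : (chooseBasis E N).repr (ExteriorAlgebra.ι K (bV K V k) • y)
        = ExteriorAlgebra.ι K (bV K V k) • (chooseBasis E N).repr y := map_smul _ _ _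
    rw [this]
    simp only [Finsupp.smul_apply, smul_eq_mul]
    exact Submodule.subset_span ⟨k, hk, _, rfl⟩
  | zero => simp only [map_zero, Finsupp.coe_zero, Pi.zero_apply]; exact zero_mem _
  | add a b _ _ ha hb => rw [map_add]; exact add_mem (by simpa using ha) (by simpa using hb)
  | smul c a _ ha =>
    have hrw : (chooseBasis E N).repr (c • a) = (algebraMap K E c) • (chooseBasis E N).repr a := by
      rw [← algebraMap_smul E c a, map_smul]
    rw [hrw]
    simp only [Finsupp.smul_apply, smul_eq_mul, ← Algebra.smul_def]
    exact Submodule.smul_mem _ c ha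

lemma mem_MS_of_repr {S : Finset (Fin vdim)} {q : N}
    (h : ∀ i, (chooseBasis E N).repr q i ∈ JS K V S) : q ∈ MS K V S N :=
  sum_repr_smul_mem (V := V) q fun i => smul_mem_MS (h i) _

/-- F5 : if `ι (b k) • q ∈ MS S N` and `k ∉ S`, then `q` splits. -/
lemma split_of_ι_smul_mem_MS {S : Finset (Fin vdim)} {k : Fin vdim} (hk : k ∉ S) {q : N}
    (h : (ExteriorAlgebra.ι K (bV K V k)) • q ∈ MS K V S N) :
    ∃ c : N, q - (ExteriorAlgebra.ι K (bV K V k)) • c ∈ MS K V S N := by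
  classical
  set B := chooseBasis E N
  set dk : E →ₗ[K] E :=
    CliffordAlgebra.contractLeft (Q := (0 : QuadraticForm K V)) ((bV K V).coord k) with hdk
  refine ⟨B.repr.symm (Finsupp.mapRange dk (map_zero dk) (B.repr q)), ?_⟩
  apply mem_MS_of_repr
  intro i
  have h1 : B.repr ((ExteriorAlgebra.ι K (bV K V k)) •
      B.repr.symm (Finsupp.mapRange dk (map_zero dk) (B.repr q)))
      = ExteriorAlgebra.ι K (bV K V k) • Finsupp.mapRange dk (map_zero dk) (B.repr q) := by
    rw [map_smul, LinearEquiv.apply_symm_apply]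
  rw [map_sub, h1]
  have h2 : ∀ j, B.repr ((ExteriorAlgebra.ι K (bV K V k)) • q) j
      = ExteriorAlgebra.ι K (bV K V k) * B.repr q j := by
    intro j
    rw [map_smul]
    simp
  simp only [Finsupp.coe_sub, Pi.sub_apply, Finsupp.smul_apply, Finsupp.mapRange_apply,
    smul_eq_mul]
  exact JS_split hk (by rw [← h2 i]; exact repr_mem_JS_of_mem_MS h i)

end

noncomputable section
namespace TateAux

variable {K : Type} [Field K] {V : Type} [AddCommGroup V] [Module K V]
  [FiniteDimensional K V]

local notation "E" => ExteriorAlgebra K V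
local notation "vdim" => Module.finrank K V

variable {X : Type} [AddCommGroup X] [Module K X]

/-- Projection onto the degree-`j` part. -/
def pj (𝒳 : ℤ → Submodule K X) [DirectSum.Decomposition 𝒳] (j : ℤ) : X →ₗ[K] X :=
  (𝒳 j).subtype ∘ₗ (DFinsupp.lapply j) ∘ₗ (DirectSum.decomposeLinearEquiv 𝒳).toLinearMap

variable (𝒳 : ℤ → Submodule K X) [DirectSum.Decomposition 𝒳]

lemma pj_apply (j : ℤ) (x : X) : pj 𝒳 j x = ↑(DirectSum.decompose 𝒳 x j) := rfl

lemma pj_mem (j : ℤ) (x : X) : pj 𝒳 j x ∈ 𝒳 j := (DirectSum.decompose 𝒳 x j).2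

lemma pj_of_mem {j : ℤ} {x : X} (hx : x ∈ 𝒳 j) : pj 𝒳 j x = x := by
  rw [pj_apply, DirectSum.decompose_of_mem_same 𝒳 hx]

lemma pj_of_mem_ne {i j : ℤ} {x : X} (hx : x ∈ 𝒳 i) (hij : i ≠ j) : pj 𝒳 j x = 0 := by
  rw [pj_apply, DirectSum.decompose_of_mem_ne 𝒳 hx hij]

lemma sum_pj (x : X) [∀ (i : ℤ) (y : 𝒳 i), Decidable (y ≠ 0)] :
    ∑ j ∈ (DirectSum.decompose 𝒳 x).support, pj 𝒳 j x = x := by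
  simpa [pj_apply] using DirectSum.sum_support_decompose 𝒳 x

variable {Y : Type} [AddCommGroup Y] [Module K Y]

/-- Projections commute with degree-shifting linear maps. -/
lemma pj_comm (𝒴 : ℤ → Submodule K Y) [DirectSum.Decomposition 𝒴]
    (L : X →ₗ[K] Y) (c : ℤ) (hL : ∀ (m : ℤ) (x : X), x ∈ 𝒳 m → L x ∈ 𝒴 (m + c))
    (j : ℤ) (x : X) : pj 𝒴 (j + c) (L x) = L (pj 𝒳 j x) := by
  classical
  have hx : L x = ∑ m ∈ (DirectSum.decompose 𝒳 x).support, L (pj 𝒳 m x) := by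
    rw [← map_sum, sum_pj 𝒳 x]
  rw [hx, map_sum, Finset.sum_eq_single j]
  · exact pj_of_mem 𝒴 (hL j _ (pj_mem 𝒳 j x))
  · intro m _ hm
    exact pj_of_mem_ne 𝒴 (hL m _ (pj_mem 𝒳 m x)) (fun h => hm (by omega))
  · intro hj
    have h0 : pj 𝒳 j x = 0 := by
      rw [pj_apply]
      rw [DFinsupp.notMem_support_iff] at hj
      rw [hj]
      rfl
    rw [h0, map_zero, map_zero]

end TateAux
end

noncomputable section
namespace TateAux2

open TateAux

variable (K : Type) [Field K] (V : Type) [AddCommGroup V] [Module K V]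
  [FiniteDimensional K V]

local notation "E" => ExteriorAlgebra K V
local notation "vdim" => Module.finrank K V

variable {T : ℤ → Type} [∀ l, AddCommGroup (T l)] [∀ l, Module K (T l)]
  [∀ l, Module (ExteriorAlgebra K V) (T l)]
  [∀ l, IsScalarTower K (ExteriorAlgebra K V) (T l)]
  [∀ l, Module.Free (ExteriorAlgebra K V) (T l)]
  (𝒯 : ∀ l : ℤ, ℤ → Submodule K (T l))
  [∀ l, DirectSum.Decomposition (𝒯 l)]

/-- Scalar action of `ι w` as a `K`-linear map. -/
def ιs (l : ℤ) (w : V) : T l →ₗ[K] T l where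
  toFun x := (ExteriorAlgebra.ι K w) • x
  map_add' x y := smul_add _ x y
  map_smul' k x := (smul_comm k (ExteriorAlgebra.ι K w) x).symm

section proj

variable (hgrade : ∀ (l m : ℤ) (w : V), ∀ x ∈ 𝒯 l m, (ExteriorAlgebra.ι K w) • x ∈ 𝒯 l (m-1))
  (d : ∀ l : ℤ, T l →ₗ[ExteriorAlgebra K V] T (l+1))
  (hd : ∀ (l m : ℤ), ∀ x ∈ 𝒯 l m, d l x ∈ 𝒯 (l+1) m)

include hd in
/-- Projections commute with the differential. -/
lemma pj_d (l j : ℤ) (x : T l) :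
    pj (𝒯 (l+1)) j (d l x) = d l (pj (𝒯 l) j x) := by
  have h := pj_comm (𝒯 l) (𝒯 (l+1)) ((d l).restrictScalars K) 0
    (fun m x hx => by simpa using hd l m x hx) j x
  simpa using h

include hgrade in
/-- Projections commute with multiplication by `ι w`. -/
lemma pj_ιsmul (l : ℤ) (w : V) (j : ℤ) (x : T l) :
    pj (𝒯 l) j ((ExteriorAlgebra.ι K w) • x)
      = (ExteriorAlgebra.ι K w) • (pj (𝒯 l) (j+1) x) := by
  have h := pj_comm (𝒯 l) (𝒯 l) (ιs K V l w) (-1)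
    (fun m x hx => by rw [← sub_eq_add_neg]; exact hgrade l m w x hx) (j+1) x
  have hj : j + 1 + (-1) = j := by omega
  rw [hj] at h
  simpa [ιs] using h

include hgrade in
/-- `MS` is stable under projections. -/
lemma pj_MS {S : Finset (Fin vdim)} {l j : ℤ} {z : T l} (hz : z ∈ MS K V S (T l)) :
    pj (𝒯 l) j z ∈ MS K V S (T l) := by
  induction hz using Submodule.span_induction with
  | mem x hx =>
    obtain ⟨k, hk, y, rfl⟩ := hx
    rw [pj_ιsmul K V 𝒯 hgrade]
    exact Submodule.subset_span ⟨k, hk, _, rfl⟩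
  | zero => rw [map_zero]; exact zero_mem _
  | add a b _ _ ha hb => rw [map_add]; exact add_mem ha hb
  | smul c a _ ha => rw [map_smul]; exact Submodule.smul_mem _ c ha

include hd in
/-- Homogeneous elements in the image of `d` have homogeneous preimages. -/
lemma prj_lift {l c : ℤ} {y : T (l+1)} (hy : y ∈ 𝒯 (l+1) c)
    (hy' : y ∈ LinearMap.range (d l)) : ∃ u ∈ 𝒯 l c, d l u = y := by
  obtain ⟨u₀, rfl⟩ := hy'
  refine ⟨pj (𝒯 l) c u₀, pj_mem _ _ _, ?_⟩
  rw [← pj_d K V 𝒯 d hd, pj_of_mem _ hy]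

end proj

/-- The `t`-fold `𝔪`-filtration by homogeneous pieces. -/
def Qsub (l : ℤ) : ℕ → ℤ → Submodule K (T l)
  | 0 => fun j => 𝒯 l j
  | (t+1) => fun j => Submodule.span K
      {z : T l | ∃ (w : V) (y : T l), y ∈ Qsub l t (j+1) ∧ z = (ExteriorAlgebra.ι K w) • y}

section F3

variable (hgrade : ∀ (l m : ℤ) (w : V), ∀ x ∈ 𝒯 l m, (ExteriorAlgebra.ι K w) • x ∈ 𝒯 l (m-1))

include hgrade in
/-- F3: elements far below the generator bound lie deep in the `𝔪`-filtration. -/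
lemma F3 {l : ℤ} {a : ℤ} (hyp : ∀ j' : ℤ, j' < a → 𝒯 l j' ≤ mT K V (T l)) :
    ∀ (t : ℕ) (j : ℤ), j + t ≤ a → 𝒯 l j ≤ Qsub K V 𝒯 l t j := by
  intro t
  induction t with
  | zero => intro j _; exact le_refl _
  | succ t ih =>
    intro j hj x hx
    have hx' : x ∈ mT K V (T l) := hyp j (by push_cast at hj ⊢; omega) hx
    have hpj : pj (𝒯 l) j x = x := pj_of_mem _ hx
    have key : pj (𝒯 l) j x ∈ Submodule.span K
        {z : T l | ∃ (w : V) (y : T l), y ∈ 𝒯 l (j+1) ∧ z = (ExteriorAlgebra.ι K w) • y} := by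
      clear hpj hx
      induction hx' using Submodule.span_induction with
      | mem z hz =>
        obtain ⟨w, y, rfl⟩ := hz
        rw [pj_ιsmul K V 𝒯 hgrade]
        exact Submodule.subset_span ⟨w, _, pj_mem _ _ _, rfl⟩
      | zero => rw [map_zero]; exact zero_mem _
      | add a b _ _ ha hb => rw [map_add]; exact add_mem ha hb
      | smul c a _ ha => rw [map_smul]; exact Submodule.smul_mem _ c ha
    rw [hpj] at key
    refine Submodule.span_le.mpr ?_ key
    rintro z ⟨w, y, hy, rfl⟩
    have hyQ : y ∈ Qsub K V 𝒯 l t (j+1) :=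
      ih (j+1) (by push_cast at hj ⊢; omega) hy
    exact Submodule.subset_span ⟨w, y, hyQ, rfl⟩

end F3

section Dkill

variable (d : ∀ l : ℤ, T l →ₗ[ExteriorAlgebra K V] T (l+1))
  (hmin : ∀ (l : ℤ) (x : T l), d l x ∈ mT K V (T (l+1)))

/-- Auxiliary submodule: `(t+1)`-fold `ι`-products times arbitrary elements. -/
def Psub (l : ℤ) (t : ℕ) : Submodule K (T (l+1)) :=
  Submodule.span K {z : T (l+1) | ∃ (L : List V) (y : T (l+1)),
    L.length = t + 1 ∧ z = (ιProd K V L) • y}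

include hmin in
lemma d_Qsub_mem_Psub {l : ℤ} : ∀ (t : ℕ) (j : ℤ), ∀ x ∈ Qsub K V 𝒯 l t j,
    d l x ∈ Psub K V (T := T) l t := by
  intro t
  induction t with
  | zero =>
    intro j x _
    have hx' := hmin l x
    refine Submodule.span_le.mpr ?_ hx'
    rintro z ⟨w, y, rfl⟩
    exact Submodule.subset_span ⟨[w], y, rfl, by simp⟩
  | succ t ih =>
    intro j x hx
    induction hx using Submodule.span_induction with
    | mem z hz =>
      obtain ⟨w, y, hy, rfl⟩ := hz
      rw [map_smul]
      have claim : ∀ z ∈ Psub K V (T := T) l t,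
          (ExteriorAlgebra.ι K w) • z ∈ Psub K V (T := T) l (t+1) := by
        intro z hz
        induction hz using Submodule.span_induction with
        | mem z' hz' =>
          obtain ⟨L, y', hL, rfl⟩ := hz'
          rw [← mul_smul, ← ιProd_cons]
          exact Submodule.subset_span ⟨w :: L, y', by simp [hL], rfl⟩
        | zero => rw [smul_zero]; exact zero_mem _
        | add a b _ _ ha hb => rw [smul_add]; exact add_mem ha hb
        | smul c a _ ha => rw [smul_comm]; exact Submodule.smul_mem _ c ha
      exact claim _ (ih (j+1) y hy)
    | zero => rw [map_zero]; exact zero_mem _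
    | add a b _ _ ha hb => rw [map_add]; exact add_mem ha hb
    | smul c a _ ha => rw [LinearMap.map_smul_of_tower]; exact Submodule.smul_mem _ c ha

lemma Psub_top_eq_bot (l : ℤ) : Psub K V (T := T) l vdim = ⊥ := by
  rw [Psub, Submodule.span_eq_bot]
  rintro z ⟨L, y, hL, rfl⟩
  rw [ιProd_eq_zero_of_long L (by omega), zero_smul]

include hmin in
/-- Elements of the `vdim`-fold filtration are killed by `d`. -/
lemma d_Qsub_eq_zero {l j : ℤ} {x : T l} (hx : x ∈ Qsub K V 𝒯 l vdim j) :
    d l x = 0 := by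
  have h := d_Qsub_mem_Psub K V 𝒯 d hmin vdim j x hx
  rw [Psub_top_eq_bot] at h
  simpa using h

end Dkill

section Main

variable (hgrade : ∀ (l m : ℤ) (w : V), ∀ x ∈ 𝒯 l m, (ExteriorAlgebra.ι K w) • x ∈ 𝒯 l (m-1))
  (d : ∀ l : ℤ, T l →ₗ[ExteriorAlgebra K V] T (l+1))
  (hd : ∀ (l m : ℤ), ∀ x ∈ 𝒯 l m, d l x ∈ 𝒯 (l+1) m)
  (hexact : ∀ l : ℤ, LinearMap.range (d l) = LinearMap.ker (d (l+1)))
  (hmin : ∀ (l : ℤ) (x : T l), d l x ∈ mT K V (T (l+1)))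
  (h0 : ∀ m : ℤ, m < 0 → 𝒯 0 m ≤ mT K V (T 0))

include hgrade in
lemma ιProd_smul_mem {l m : ℤ} {x : T l} (hx : x ∈ 𝒯 l m) (L : List V) :
    (ιProd K V L) • x ∈ 𝒯 l (m - L.length) := by
  induction L with
  | nil => simpa using hx
  | cons a L ih =>
    rw [ιProd_cons, mul_smul]
    have h := hgrade l (m - L.length) a _ ih
    have : m - (L.length : ℤ) - 1 = m - ((a :: L).length : ℤ) := by
      simp only [List.length_cons]
      push_cast
      omega
    rwa [this] at h

include hgrade hd hexact hmin h0 in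
/-- Part 1: upward propagation of the generator-degree bound. -/
lemma P1 : ∀ n : ℤ, 0 ≤ n → ∀ m : ℤ, m < n → 𝒯 n m ≤ mT K V (T n) := by
  refine Int.le_induction ?_ ?_
  · exact h0
  · intro n hn' ih m hm x hx
    -- the top form kills x
    have hy_deg : (ωe K V) • x ∈ 𝒯 (n+1) (m - vdim) := by
      have := ιProd_smul_mem K V 𝒯 hgrade hx (List.ofFn (bV K V))
      simpa [ωe] using this
    have hdy : d (n+1) ((ωe K V) • x) = 0 := by
      rw [map_smul]
      exact ωe_smul_mT (hmin (n+1) x)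
    have hyrange : (ωe K V) • x ∈ LinearMap.range (d n) := by
      rw [hexact n]
      exact hdy
    obtain ⟨u, hu, hdu⟩ := prj_lift K V 𝒯 d hd hy_deg hyrange
    have huQ : u ∈ Qsub K V 𝒯 n vdim (m - vdim) :=
      F3 K V 𝒯 hgrade ih vdim (m - vdim) (by push_cast; omega) hu
    have hy0 : (ωe K V) • x = 0 := by
      rw [← hdu, d_Qsub_eq_zero K V 𝒯 d hmin huQ]
    exact mem_mT_of_ωe_smul hy0

include hmin in
lemma d_MS {S : Finset (Fin vdim)} {l : ℤ} {z : T l} (hz : z ∈ MS K V S (T l)) :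
    d l z ∈ MS K V S (T (l+1)) := by
  induction hz using Submodule.span_induction with
  | mem x hx =>
    obtain ⟨k, hk, y, rfl⟩ := hx
    rw [map_smul]
    exact Submodule.subset_span ⟨k, hk, _, rfl⟩
  | zero => rw [map_zero]; exact zero_mem _
  | add a b _ _ ha hb => rw [map_add]; exact add_mem ha hb
  | smul c a _ ha => rw [LinearMap.map_smul_of_tower]; exact Submodule.smul_mem _ c ha

include hgrade hd hexact hmin h0 in
/-- Base case of the descending induction: for `n ≥ 0` low-degree elements are cycles. -/
lemma KLSbase {n : ℤ} (hn : 0 ≤ n) {j : ℤ} (hj : j ≤ n - vdim) {f : T n}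
    (hf : f ∈ 𝒯 n j) : d n f = 0 := by
  have hQ : f ∈ Qsub K V 𝒯 n vdim j :=
    F3 K V 𝒯 hgrade (P1 K V 𝒯 hgrade d hd hexact hmin h0 n hn) vdim j (by omega) hf
  exact d_Qsub_eq_zero K V 𝒯 d hmin hQ

include hgrade hd hexact hmin h0 in
/-- The descending correction lemma (KLS). -/
lemma KLS : ∀ (k : ℕ) (n : ℤ), -(k:ℤ) ≤ n → ∀ (S : Finset (Fin vdim)) (j : ℤ), j ≤ n - vdim →
    ∀ f ∈ 𝒯 n j, d n f ∈ MS K V S (T (n+1)) →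
    ∃ g, g ∈ MS K V S (T n) ∧ g ∈ 𝒯 n j ∧ d n g = d n f := by
  intro k
  induction k with
  | zero =>
    intro n hn S j hj f hf _
    refine ⟨0, zero_mem _, zero_mem _, ?_⟩
    rw [map_zero, KLSbase K V 𝒯 hgrade d hd hexact hmin h0 (by omega) hj hf]
  | succ k ihk =>
    intro n hn S j hj f hf hdf
    by_cases hcase : -(k:ℤ) ≤ n
    · exact ihk n hcase S j hj f hf hdf
    -- now n = -(k+1); descending step
    have hn1 : -(k:ℤ) ≤ n + 1 := by push_cast at hn ⊢; omega
    clear hcase hn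
    revert hdf hf hj
    revert j f
    induction S using Finset.strongInduction with
    | _ S ihS =>
    intro j f hj hf hdf
    rcases S.eq_empty_or_nonempty with rfl | ⟨k₀, hk₀⟩
    · rw [MS_empty] at hdf
      refine ⟨0, zero_mem _, zero_mem _, ?_⟩
      rw [map_zero, (Submodule.mem_bot K).mp hdf]
    · set S₂ := S.erase k₀ with hS₂
      have hins : insert k₀ S₂ = S := Finset.insert_erase hk₀
      have hk₀S₂ : k₀ ∉ S₂ := Finset.notMem_erase k₀ S
      -- decompose d f
      obtain ⟨h₀, ρ₀, hρ₀, hdfeq⟩ := mem_MS_insert (hins ▸ hdf)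
      have hdfj : d n f ∈ 𝒯 (n+1) j := hd n j f hf
      set h := pj (𝒯 (n+1)) (j+1) h₀ with hh
      set ρ := pj (𝒯 (n+1)) j ρ₀ with hρ
      have hhmem : h ∈ 𝒯 (n+1) (j+1) := pj_mem _ _ _
      have hρS₂ : ρ ∈ MS K V S₂ (T (n+1)) := pj_MS K V 𝒯 hgrade hρ₀
      have heq : d n f = (ExteriorAlgebra.ι K (bV K V k₀)) • h + ρ := by
        have := congrArg (pj (𝒯 (n+1)) j) hdfeq
        rwa [pj_of_mem _ hdfj, map_add, pj_ιsmul K V 𝒯 hgrade] at this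
      -- d of d is zero
      have hddf : d (n+1) (d n f) = 0 := by
        have hr : d n f ∈ LinearMap.range (d n) := ⟨f, rfl⟩
        rw [hexact n] at hr
        exact hr
      have hιdh : (ExteriorAlgebra.ι K (bV K V k₀)) • (d (n+1) h)
          ∈ MS K V S₂ (T (n+1+1)) := by
        have h1 : (ExteriorAlgebra.ι K (bV K V k₀)) • (d (n+1) h) = - d (n+1) ρ := by
          have := congrArg (d (n+1)) heq
          rw [hddf, map_add, map_smul] at this
          exact eq_neg_of_add_eq_zero_left this.symm
        rw [h1]
        exact neg_mem (d_MS K V d hmin hρS₂)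
      -- F5 split
      obtain ⟨c, hc⟩ := split_of_ι_smul_mem_MS hk₀S₂ hιdh
      have hdhS : d (n+1) h ∈ MS K V S (T (n+1+1)) := by
        have : d (n+1) h = (d (n+1) h - (ExteriorAlgebra.ι K (bV K V k₀)) • c)
            + (ExteriorAlgebra.ι K (bV K V k₀)) • c := by abel
        rw [this]
        exact add_mem (MS_mono (hS₂ ▸ Finset.erase_subset k₀ S) hc)
          (Submodule.subset_span ⟨k₀, hk₀, c, rfl⟩)
      -- apply outer induction hypothesis at level n+1
      obtain ⟨g', hg'MS, hg'deg, hdg'⟩ := ihk (n+1) hn1 S (j+1) (by omega) h hhmem hdhS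
      -- lift h - g' through d n
      have hker : h - g' ∈ LinearMap.range (d n) := by
        rw [hexact n, LinearMap.mem_ker, map_sub, hdg', sub_self]
      obtain ⟨u, hu, hdu⟩ := prj_lift K V 𝒯 d hd (sub_mem hhmem hg'deg) hker
      -- the corrected element
      have hιu : (ExteriorAlgebra.ι K (bV K V k₀)) • u ∈ 𝒯 n j := by
        have := hgrade n (j+1) (bV K V k₀) u hu
        have e : j + 1 - 1 = j := by omega
        rwa [e] at this
      set f₁ := f - (ExteriorAlgebra.ι K (bV K V k₀)) • u with hf₁
      have hf₁deg : f₁ ∈ 𝒯 n j := sub_mem hf hιu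
      have hdf₁ : d n f₁ = ρ + (ExteriorAlgebra.ι K (bV K V k₀)) • g' := by
        rw [hf₁, map_sub, map_smul, hdu, heq, smul_sub]
        abel
      have hιg' : (ExteriorAlgebra.ι K (bV K V k₀)) • g' ∈ MS K V S₂ (T (n+1)) :=
        ιk_smul_MS_insert (hins ▸ hg'MS)
      have hdf₁MS : d n f₁ ∈ MS K V S₂ (T (n+1)) := by
        rw [hdf₁]
        exact add_mem hρS₂ hιg'
      -- inner induction on S
      obtain ⟨g₂, hg₂MS, hg₂deg, hdg₂⟩ :=
        ihS S₂ (hS₂ ▸ Finset.erase_ssubset hk₀) j f₁ hj hf₁deg hdf₁MS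
      refine ⟨(ExteriorAlgebra.ι K (bV K V k₀)) • u + g₂, ?_, add_mem hιu hg₂deg, ?_⟩
      · exact add_mem (Submodule.subset_span ⟨k₀, hk₀, u, rfl⟩)
          (MS_mono (hS₂ ▸ Finset.erase_subset k₀ S) hg₂MS)
      · rw [map_add, map_smul, hdu, hdg₂, hdf₁, heq, smul_sub]
        abel

end Main
end TateAux2
end


/-!
STATEMENT 14: Let `T` be a Tate resolution over `E = ⋀ V` (`dim V = v`): a doubly infinite,
everywhere exact, minimal complex of finitely generated graded free `E`-modules.  If
`(K ⊗_E T^0)_j = 0` for all `j < 0` (i.e. `𝒯^0_j ⊆ 𝔪·T^0` for `j < 0`), then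
`(K ⊗_E T^l)_m = 0` whenever `l > 0` and `m < l`, and whenever `l < 0` and `m < l - v + 1`.
-/
theorem stmt_14
    (T : ℤ → Type) [∀ l, AddCommGroup (T l)] [∀ l, Module K (T l)]
    [∀ l, Module (ExteriorAlgebra K V) (T l)]
    [∀ l, IsScalarTower K (ExteriorAlgebra K V) (T l)]
    [∀ l, Module.Free (ExteriorAlgebra K V) (T l)]
    [∀ l, Module.Finite (ExteriorAlgebra K V) (T l)]
    (𝒯 : ∀ l : ℤ, ℤ → Submodule K (T l))
    [∀ l, DirectSum.Decomposition (𝒯 l)]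
    (hgrade : ∀ (l m : ℤ) (w : V), ∀ x ∈ 𝒯 l m, (ExteriorAlgebra.ι K w) • x ∈ 𝒯 l (m-1))
    (d : ∀ l : ℤ, T l →ₗ[ExteriorAlgebra K V] T (l+1))
    (hd : ∀ (l m : ℤ), ∀ x ∈ 𝒯 l m, d l x ∈ 𝒯 (l+1) m)
    (hexact : ∀ l : ℤ, LinearMap.range (d l) = LinearMap.ker (d (l+1)))
    (hmin : ∀ (l : ℤ) (x : T l), d l x ∈ mT K V (T (l+1)))
    (h0 : ∀ m : ℤ, m < 0 → 𝒯 0 m ≤ mT K V (T 0)) :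
    (∀ l m : ℤ, 0 < l → m < l → 𝒯 l m ≤ mT K V (T l)) ∧
    (∀ l m : ℤ, l < 0 → m < l - (Module.finrank K V : ℤ) + 1 → 𝒯 l m ≤ mT K V (T l)) := by
  constructor
  · intro l m hl hm
    exact TateAux2.P1 K V 𝒯 hgrade d hd hexact hmin h0 l (by omega) m hm
  · intro l m hl hm x hx
    obtain ⟨l', rfl⟩ : ∃ l', l = l' + 1 := ⟨l - 1, by omega⟩
    have hdx : d (l'+1) x ∈ MS K V (Finset.univ) (T (l'+1+1)) := by
      rw [MS_univ_eq_mT]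
      exact hmin (l'+1) x
    have hm' : m ≤ l' + 1 - (Module.finrank K V : ℤ) := by omega
    obtain ⟨g, hgMS, hgdeg, hdg⟩ :=
      TateAux2.KLS K V 𝒯 hgrade d hd hexact hmin h0 (-(l'+1)).toNat (l'+1)
        (by omega) Finset.univ m hm' x hx hdx
    have hker : x - g ∈ LinearMap.ker (d (l'+1)) := by
      rw [LinearMap.mem_ker, map_sub, hdg, sub_self]
    rw [← hexact l'] at hker
    obtain ⟨u, hu⟩ := hker
    have hxg : x - g ∈ mT K V (T (l'+1)) := by
      rw [← hu]
      exact hmin l' u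
    have hg : g ∈ mT K V (T (l'+1)) := by
      rw [← MS_univ_eq_mT]
      exact hgMS
    have : x = (x - g) + g := by abel
    rw [this]
    exact add_mem hxg hg

end
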